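/- In the random permutation model on {1,…,n}: for every 1 ≤ k ≤ n, the variance of \bar W_k(n) := Σ_{j=1}^n j·1_{B_{j,k}} equals k²(H^{(1)}_{k,n} − H^{(2)}_{k,n} − 3) + n²/2 + kn + 2k(H^{(1)}_{k−1} − H^{(1)}_{n−k}) − n/2 + k + 1. -/

import Mathlib

open Finset Filter Topology MeasureTheory

/-- `eventA σ j k`: in the random binary search tree built by inserting the keys
`(σ 0 : ℕ) + 1, (σ 1 : ℕ) + 1, …` (so that the keys are `{1, …, n}` and `σ` is the
insertion order), the node labelled `k` lies in the subtree rooted at the node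
labelled `j`; equivalently (for `j ≠ k`), `j` occurs before all other elements of
`{min j k, …, max j k}` in the insertion order.  For `j = k` this is the sure event. -/
def eventA {n : ℕ} (σ : Equiv.Perm (Fin n)) (j k : ℕ) : Prop :=
  ∀ jf mf : Fin n, (jf : ℕ) + 1 = j →
    min j k ≤ (mf : ℕ) + 1 → (mf : ℕ) + 1 ≤ max j k → (mf : ℕ) + 1 ≠ j →
      σ.symm jf < σ.symm mf

/-- `eventB σ j k`: the event `B_{j,k}`, i.e. `A_{j,k-1}` for `j < k`,
`A_{j,k+1}` for `j > k`, and the sure event for `j = k`. -/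
def eventB {n : ℕ} (σ : Equiv.Perm (Fin n)) (j k : ℕ) : Prop :=
  if j < k then eventA σ j (k - 1) else if k < j then eventA σ j (k + 1) else True

open Classical in
/-- probability of an event under the uniform distribution on permutations. -/
noncomputable def probPerm {n : ℕ} (E : Equiv.Perm (Fin n) → Prop) : ℝ :=
  ((Finset.univ.filter fun σ => E σ).card : ℝ) / (Fintype.card (Equiv.Perm (Fin n)) : ℝ)

/-- expectation of a random variable under the uniform distribution on permutations. -/
noncomputable def expPerm {n : ℕ} (X : Equiv.Perm (Fin n) → ℝ) : ℝ :=
  (∑ σ : Equiv.Perm (Fin n), X σ) / (Fintype.card (Equiv.Perm (Fin n)) : ℝ)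

/-- variance of a random variable under the uniform distribution on permutations. -/
noncomputable def varPerm {n : ℕ} (X : Equiv.Perm (Fin n) → ℝ) : ℝ :=
  expPerm fun σ => (X σ - expPerm X) ^ 2

open Classical in
/-- real-valued indicator of a proposition. -/
noncomputable def ind (P : Prop) : ℝ := if P then 1 else 0

/-- `depthD σ k = D_k(n)`, the depth of the node labelled `k`. -/
noncomputable def depthD {n : ℕ} (σ : Equiv.Perm (Fin n)) (k : ℕ) : ℝ :=
  (∑ j : Fin n, ind (eventA σ ((j : ℕ) + 1) k)) - 1

/-- `weightW σ k = W_k(n)`, the weighted depth of the node labelled `k`. -/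
noncomputable def weightW {n : ℕ} (σ : Equiv.Perm (Fin n)) (k : ℕ) : ℝ :=
  ∑ j : Fin n, ((j : ℕ) + 1 : ℝ) * ind (eventA σ ((j : ℕ) + 1) k)

/-- `barW σ k = \bar W_k(n) = Σ_{j=1}^n j · 1_{B_{j,k}}`. -/
noncomputable def barW {n : ℕ} (σ : Equiv.Perm (Fin n)) (k : ℕ) : ℝ :=
  ∑ j : Fin n, ((j : ℕ) + 1 : ℝ) * ind (eventB σ ((j : ℕ) + 1) k)

/-- first-order harmonic number `H^{(1)}_m = Σ_{j=1}^m 1/j`. -/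
noncomputable def H1 (m : ℕ) : ℝ := ∑ j ∈ Finset.range m, (1 : ℝ) / (j + 1)

/-- second-order harmonic number `H^{(2)}_m = Σ_{j=1}^m 1/j²`. -/
noncomputable def H2 (m : ℕ) : ℝ := ∑ j ∈ Finset.range m, (1 : ℝ) / (j + 1) ^ 2

/-!
The event `B_{j,k}`, `j ≠ k`, says that key `j` is inserted first among the keys from `j`
towards `k`, excluding `k`; by symmetry it has probability `1 / |j - k|`. For keys `j ≠ l`
these two key sets are either disjoint or nested with the outer key outside the inner set;
in both cases a transposition inside the inner set preserves both sets and fixes the outer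
key, which makes `B_{j,k}` and `B_{l,k}` independent. So the variance of
`Σ j · 1_{B_{j,k}}` is `Σ j² (p_j - p_j²)`, a sum of harmonic type.
-/

namespace RandomBST

open Equiv Finset
open scoped BigOperators

section FirstIn

variable {α : Type*} [LinearOrder α]

/-- The insertion time of `x` is `σ.symm x`. -/
def IsFirstIn (σ : Perm α) (a : α) (F : Finset α) : Prop :=
  ∀ m ∈ F, m ≠ a → σ.symm a < σ.symm m

instance (σ : Perm α) (a : α) (F : Finset α) : Decidable (IsFirstIn σ a F) := by
  unfold IsFirstIn; infer_instance

variable {σ : Perm α} {a b : α} {F G : Finset α}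

lemma exists_isFirstIn (σ : Perm α) (hF : F.Nonempty) : ∃ x ∈ F, IsFirstIn σ x F := by
  obtain ⟨x, hx, hmin⟩ := F.exists_min_image σ.symm hF
  exact ⟨x, hx, fun m hm hmx => (hmin m hm).lt_of_ne fun h => hmx (σ.symm.injective h).symm⟩

lemma IsFirstIn.eq {x y : α} (hx : IsFirstIn σ x F) (hy : IsFirstIn σ y F) (hxF : x ∈ F)
    (hyF : y ∈ F) : x = y := by
  by_contra hxy
  exact (hx y hyF (Ne.symm hxy)).asymm (hy x hxF hxy)

lemma isFirstIn_mul_iff {τ : Perm α} (hτ : ∀ m, τ m ∈ F ↔ m ∈ F) :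
    IsFirstIn (τ * σ) (τ a) F ↔ IsFirstIn σ a F := by
  simp only [IsFirstIn, Perm.mul_def, symm_trans_apply, symm_apply_apply]
  constructor
  · intro h m hm hma
    simpa using h (τ m) ((hτ m).2 hm) (τ.injective.ne hma)
  · intro h m hm hma
    exact h (τ.symm m) ((hτ _).1 (by simpa using hm)) fun he => hma (by simp [← he])

lemma swap_apply_mem_iff {x y : α} (h : x ∈ F ↔ y ∈ F) (m : α) : swap x y m ∈ F ↔ m ∈ F := by
  rcases eq_or_ne m x with rfl | hmx
  · simpa using h.symm
  rcases eq_or_ne m y with rfl | hmy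
  · simpa using h
  · rw [swap_apply_of_ne_of_ne hmx hmy]

variable [Fintype α]

lemma card_filter_mul_left (τ : Perm α) (P : Perm α → Prop) [DecidablePred P] :
    #{σ | P (τ * σ)} = #{σ | P σ} :=
  Finset.card_equiv (Equiv.mulLeft τ) (by simp)

lemma card_filter_eq_sum_card_isFirstIn (P : Perm α → Prop) [DecidablePred P]
    (hF : F.Nonempty) : #{σ | P σ} = ∑ x ∈ F, #{σ | P σ ∧ IsFirstIn σ x F} := by
  rw [← Finset.card_biUnion]
  · congr 1
    ext σ
    simp only [Finset.mem_filter, Finset.mem_univ, true_and, Finset.mem_biUnion]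
    obtain ⟨x, hx, hfirst⟩ := exists_isFirstIn σ hF
    exact ⟨fun h => ⟨x, hx, h, hfirst⟩, fun ⟨_, _, h, _⟩ => h⟩
  · intro x hx y hy hxy
    simp only [Function.onFun, Finset.disjoint_left, Finset.mem_filter, Finset.mem_univ, true_and]
    exact fun σ hσx hσy => hxy (hσx.2.eq hσy.2 hx hy)

lemma card_isFirstIn_eq {x : α} (ha : a ∈ F) (hx : x ∈ F) :
    #{σ | IsFirstIn σ x F} = #{σ | IsFirstIn σ a F} := by
  refine (card_filter_mul_left (swap a x) (IsFirstIn · x F)).symm.trans ?_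
  congr! 2 with σ
  have h := isFirstIn_mul_iff (σ := σ) (a := a) (swap_apply_mem_iff (iff_of_true ha hx))
  rwa [swap_apply_left] at h

lemma card_isFirstIn_mul_card (ha : a ∈ F) :
    #{σ | IsFirstIn σ a F} * #F = Fintype.card (Perm α) := by
  have h := card_filter_eq_sum_card_isFirstIn (fun _ : Perm α => True) ⟨a, ha⟩
  simp only [Finset.filter_true, true_and] at h
  rw [← card_univ, h, sum_congr rfl fun x hx => card_isFirstIn_eq ha hx, sum_const, smul_eq_mul,
    mul_comm]

/-- A transposition inside `G` fixes `a` and preserves `F` and `G`, so every element of `G`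
is first in `G` equally often jointly with `a` being first in `F`. -/
lemma card_isFirstIn_and_isFirstIn_mul (ha : a ∈ F) (haG : a ∉ G) (hb : b ∈ G)
    (hFG : G ⊆ F ∨ Disjoint F G) :
    #{σ | IsFirstIn σ a F ∧ IsFirstIn σ b G} * (#F * #G) = Fintype.card (Perm α) := by
  have hG_F : ∀ y ∈ G, (b ∈ F ↔ y ∈ F) := by
    rcases hFG with hGF | hdisj
    · exact fun y hy => iff_of_true (hGF hb) (hGF hy)
    · exact fun y hy => iff_of_false (Finset.disjoint_right.1 hdisj hb)
        (Finset.disjoint_right.1 hdisj hy)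
  have hconst : ∀ y ∈ G, #{σ | IsFirstIn σ a F ∧ IsFirstIn σ y G}
      = #{σ | IsFirstIn σ a F ∧ IsFirstIn σ b G} := by
    intro y hy
    refine (card_filter_mul_left (swap b y)
      (fun σ => IsFirstIn σ a F ∧ IsFirstIn σ y G)).symm.trans ?_
    have hfix : swap b y a = a :=
      swap_apply_of_ne_of_ne (by rintro rfl; exact haG hb) (by rintro rfl; exact haG hy)
    congr! 2 with σ
    have hF := isFirstIn_mul_iff (σ := σ) (a := a) (swap_apply_mem_iff (hG_F y hy))
    have hG := isFirstIn_mul_iff (σ := σ) (a := b) (swap_apply_mem_iff (iff_of_true hb hy))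
    rw [hfix] at hF
    rw [swap_apply_left] at hG
    exact and_congr hF hG
  have hsplit := card_filter_eq_sum_card_isFirstIn (IsFirstIn · a F) ⟨b, hb⟩
  rw [Finset.sum_congr rfl hconst, Finset.sum_const, smul_eq_mul] at hsplit
  rw [← card_isFirstIn_mul_card ha, hsplit]
  ring

end FirstIn

section Uniform

variable {n : ℕ}

lemma expPerm_eq_expect (X : Perm (Fin n) → ℝ) : expPerm X = 𝔼 σ, X σ :=
  (Fintype.expect_eq_sum_div_card X).symm

lemma expPerm_sum {ι : Type*} (s : Finset ι) (X : ι → Perm (Fin n) → ℝ) :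
    expPerm (fun σ => ∑ i ∈ s, X i σ) = ∑ i ∈ s, expPerm (X i) := by
  simp only [expPerm_eq_expect, expect_sum_comm]

lemma expPerm_const_mul (c : ℝ) (X : Perm (Fin n) → ℝ) :
    expPerm (fun σ => c * X σ) = c * expPerm X := by
  simp only [expPerm_eq_expect, mul_expect]

lemma expPerm_ind (E : Perm (Fin n) → Prop) : expPerm (fun σ => ind (E σ)) = probPerm E := by
  classical
  simp only [probPerm, expPerm, ind, Finset.sum_boole]

lemma ind_and (P Q : Prop) : ind (P ∧ Q) = ind P * ind Q := by
  classical
  by_cases hP : P <;> by_cases hQ : Q <;> simp [ind, hP, hQ]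

lemma probPerm_eq_inv_of_card_mul {E : Perm (Fin n) → Prop} [DecidablePred E] {d : ℕ}
    (h : #{σ | E σ} * d = Fintype.card (Perm (Fin n))) : probPerm E = (d : ℝ)⁻¹ := by
  have hN : (Fintype.card (Perm (Fin n)) : ℝ) ≠ 0 := Nat.cast_ne_zero.2 Fintype.card_ne_zero
  have hcast : (#{σ | E σ} : ℝ) * d = Fintype.card (Perm (Fin n)) := by exact_mod_cast h
  have hd : (d : ℝ) ≠ 0 := by
    rintro hd
    rw [hd, mul_zero] at hcast
    exact hN hcast.symm
  rw [probPerm, div_eq_iff hN, ← hcast, mul_comm, mul_inv_cancel_right₀ hd]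
  congr!

lemma varPerm_eq_sub (X : Perm (Fin n) → ℝ) :
    varPerm X = expPerm (fun σ => X σ ^ 2) - expPerm X ^ 2 := by
  simp only [varPerm, expPerm_eq_expect, sub_sq, expect_add_distrib, expect_sub_distrib,
    ← expect_mul, ← mul_expect, Fintype.expect_const]
  ring

lemma varPerm_sum_mul_ind {ι : Type*} (s : Finset ι) (c : ι → ℝ) (E : ι → Perm (Fin n) → Prop)
    (hE : ∀ i ∈ s, ∀ j ∈ s, i ≠ j →
      probPerm (fun σ => E i σ ∧ E j σ) = probPerm (E i) * probPerm (E j)) :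
    varPerm (fun σ => ∑ i ∈ s, c i * ind (E i σ))
      = ∑ i ∈ s, c i ^ 2 * (probPerm (E i) - probPerm (E i) ^ 2) := by
  have hsq : ∀ σ, (∑ i ∈ s, c i * ind (E i σ)) ^ 2
      = ∑ i ∈ s, ∑ j ∈ s, c i * c j * ind (E i σ ∧ E j σ) := fun σ => by
    simp only [sq, sum_mul_sum, ind_and]
    exact sum_congr rfl fun i _ => sum_congr rfl fun j _ => by ring
  rw [varPerm_eq_sub, funext hsq]
  simp only [expPerm_sum, expPerm_const_mul, expPerm_ind, sq, sum_mul_sum, ← sum_sub_distrib]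
  refine sum_congr rfl fun i hi => ?_
  rw [sum_eq_single_of_mem i hi fun j hj hji => by rw [hE i hi j hj hji.symm]; ring]
  simp only [and_self]
  ring

end Uniform

section Keys

variable {n : ℕ}

/-- Index `m : Fin n` carries key `m + 1`. -/
def keysBetween (i j : ℕ) : Finset (Fin n) :=
  {m | min i j ≤ (m : ℕ) + 1 ∧ (m : ℕ) + 1 ≤ max i j}

def keysB (k u : ℕ) : Finset (Fin n) :=
  {m | min u k ≤ (m : ℕ) + 1 ∧ (m : ℕ) + 1 ≤ max u k ∧ (m : ℕ) + 1 ≠ k}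

lemma mem_keysBetween {i j : ℕ} {m : Fin n} :
    m ∈ keysBetween i j ↔ min i j ≤ (m : ℕ) + 1 ∧ (m : ℕ) + 1 ≤ max i j := by
  simp [keysBetween]

lemma mem_keysB {k u : ℕ} {m : Fin n} :
    m ∈ keysB k u ↔ min u k ≤ (m : ℕ) + 1 ∧ (m : ℕ) + 1 ≤ max u k ∧ (m : ℕ) + 1 ≠ k := by
  simp [keysB]

lemma card_keysBetween {i j : ℕ} (hmin : 1 ≤ min i j) (hmax : max i j ≤ n) :
    #(keysBetween i j : Finset (Fin n)) = max i j + 1 - min i j := by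
  rw [← Nat.card_Icc]
  refine card_bij (fun m _ => (m : ℕ) + 1) (fun m hm => ?_) (fun _ _ _ _ h => ?_) fun u hu => ?_
  · simpa only [Finset.mem_Icc, mem_keysBetween] using hm
  · exact Fin.ext (by simpa using h)
  · rw [Finset.mem_Icc] at hu
    exact ⟨⟨u - 1, by omega⟩, mem_keysBetween.2 (by rw [Fin.val_mk]; omega),
      by rw [Fin.val_mk]; omega⟩

lemma eventA_iff_isFirstIn (σ : Perm (Fin n)) (j : Fin n) (k : ℕ) :
    eventA σ ((j : ℕ) + 1) k ↔ IsFirstIn σ j (keysBetween ((j : ℕ) + 1) k) := by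
  constructor
  · intro h m hm hmj
    exact h j m rfl (mem_keysBetween.1 hm).1 (mem_keysBetween.1 hm).2
      fun he => hmj (Fin.ext (by omega))
  · intro h jf m hjf hmin hmax hmj
    obtain rfl : jf = j := Fin.ext (by omega)
    exact h m (mem_keysBetween.2 ⟨hmin, hmax⟩) fun he => hmj (by rw [he])

lemma keysBetween_eq_keysB_of_lt {k u : ℕ} (h : u < k) :
    (keysBetween u (k - 1) : Finset (Fin n)) = keysB k u := by
  ext m
  rw [mem_keysBetween, mem_keysB]
  omega

lemma keysBetween_eq_keysB_of_gt {k u : ℕ} (h : k < u) :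
    (keysBetween u (k + 1) : Finset (Fin n)) = keysB k u := by
  ext m
  rw [mem_keysBetween, mem_keysB]
  omega

lemma eventB_iff_isFirstIn (σ : Perm (Fin n)) {j : Fin n} {k : ℕ} (hj : (j : ℕ) + 1 ≠ k) :
    eventB σ ((j : ℕ) + 1) k ↔ IsFirstIn σ j (keysB k ((j : ℕ) + 1)) := by
  unfold eventB
  rcases lt_or_gt_of_ne hj with h | h
  · rw [if_pos h, eventA_iff_isFirstIn, keysBetween_eq_keysB_of_lt h]
  · rw [if_neg h.not_gt, if_pos h, eventA_iff_isFirstIn, keysBetween_eq_keysB_of_gt h]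

lemma mem_keysB_self {k : ℕ} {j : Fin n} (hj : (j : ℕ) + 1 ≠ k) : j ∈ keysB k ((j : ℕ) + 1) := by
  rw [mem_keysB]
  omega

lemma card_keysB {k : ℕ} (hk1 : 1 ≤ k) (hkn : k ≤ n) {j : Fin n} (hj : (j : ℕ) + 1 ≠ k) :
    (#(keysB k ((j : ℕ) + 1) : Finset (Fin n)) : ℝ) = |(((j : ℕ) + 1 : ℕ) : ℝ) - k| := by
  have hj' := j.isLt
  rcases lt_or_gt_of_ne hj with h | h
  · rw [← keysBetween_eq_keysB_of_lt h, card_keysBetween (by omega) (by omega),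
      abs_of_neg (sub_neg.2 (by exact_mod_cast h)), show max ((j : ℕ) + 1) (k - 1) + 1
        - min ((j : ℕ) + 1) (k - 1) = k - ((j : ℕ) + 1) by omega, Nat.cast_sub h.le]
    push_cast
    ring
  · rw [← keysBetween_eq_keysB_of_gt h, card_keysBetween (by omega) (by omega),
      abs_of_pos (sub_pos.2 (by exact_mod_cast h)), show max ((j : ℕ) + 1) (k + 1) + 1
        - min ((j : ℕ) + 1) (k + 1) = (j : ℕ) + 1 - k by omega, Nat.cast_sub h.le]

lemma keysB_laminar {k : ℕ} {j l : Fin n} (hjl : j < l) (hj : (j : ℕ) + 1 ≠ k)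
    (hl : (l : ℕ) + 1 ≠ k) :
    (keysB k ((l : ℕ) + 1) ⊆ (keysB k ((j : ℕ) + 1) : Finset (Fin n))
        ∧ j ∉ keysB k ((l : ℕ) + 1))
      ∨ Disjoint (keysB k ((j : ℕ) + 1) : Finset (Fin n)) (keysB k ((l : ℕ) + 1))
      ∨ (keysB k ((j : ℕ) + 1) ⊆ (keysB k ((l : ℕ) + 1) : Finset (Fin n))
        ∧ l ∉ keysB k ((j : ℕ) + 1)) := by
  have hjl' : (j : ℕ) < l := hjl
  simp only [subset_iff, disjoint_left, mem_keysB]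
  rcases lt_or_gt_of_ne hl with hlk | hkl
  · exact Or.inl ⟨fun m hm => by omega, by omega⟩
  rcases lt_or_gt_of_ne hj with hjk | hkj
  · exact Or.inr (Or.inl fun m hm => by omega)
  · exact Or.inr (Or.inr ⟨fun m hm => by omega, by omega⟩)

end Keys

section ProbB

variable {n k : ℕ}

lemma probPerm_isFirstIn {a : Fin n} {F : Finset (Fin n)} (ha : a ∈ F) :
    probPerm (IsFirstIn · a F) = (#F : ℝ)⁻¹ :=
  probPerm_eq_inv_of_card_mul (card_isFirstIn_mul_card ha)

lemma probPerm_isFirstIn_and {a b : Fin n} {F G : Finset (Fin n)} (ha : a ∈ F) (hb : b ∈ G)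
    (hFG : (G ⊆ F ∧ a ∉ G) ∨ Disjoint F G ∨ (F ⊆ G ∧ b ∉ F)) :
    probPerm (fun σ => IsFirstIn σ a F ∧ IsFirstIn σ b G) = (#F : ℝ)⁻¹ * (#G : ℝ)⁻¹ := by
  have hcard : #{σ | IsFirstIn σ a F ∧ IsFirstIn σ b G} * (#F * #G)
      = Fintype.card (Perm (Fin n)) := by
    rcases hFG with ⟨hGF, haG⟩ | hdisj | ⟨hFG, hbF⟩
    · exact card_isFirstIn_and_isFirstIn_mul ha haG hb (Or.inl hGF)
    · exact card_isFirstIn_and_isFirstIn_mul ha (disjoint_left.1 hdisj ha) hb (Or.inr hdisj)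
    · rw [mul_comm #F #G, filter_congr fun σ _ => and_comm]
      exact card_isFirstIn_and_isFirstIn_mul hb hbF ha (Or.inl hFG)
  rw [probPerm_eq_inv_of_card_mul hcard, Nat.cast_mul, mul_inv]

noncomputable def probB (k u : ℕ) : ℝ := if u = k then 1 else 1 / |(u : ℝ) - k|

lemma probB_self (k : ℕ) : probB k k = 1 := if_pos rfl

lemma eventB_self (σ : Perm (Fin n)) (k : ℕ) : eventB σ k k := by
  simp [eventB]

lemma probPerm_eventB (hk1 : 1 ≤ k) (hkn : k ≤ n) (j : Fin n) :
    probPerm (fun σ : Perm (Fin n) => eventB σ ((j : ℕ) + 1) k) = probB k ((j : ℕ) + 1) := by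
  by_cases hj : (j : ℕ) + 1 = k
  · simp only [hj, eventB_self, probB_self]
    rw [probPerm_eq_inv_of_card_mul (d := 1) (by simp), Nat.cast_one, inv_one]
  · simp only [eventB_iff_isFirstIn _ hj]
    rw [probB, if_neg hj, ← card_keysB hk1 hkn hj, one_div]
    exact probPerm_isFirstIn (mem_keysB_self hj)

lemma probPerm_eventB_and (hk1 : 1 ≤ k) (hkn : k ≤ n) {j l : Fin n} (hjl : j ≠ l) :
    probPerm (fun σ : Perm (Fin n) => eventB σ ((j : ℕ) + 1) k ∧ eventB σ ((l : ℕ) + 1) k)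
      = probB k ((j : ℕ) + 1) * probB k ((l : ℕ) + 1) := by
  wlog hlt : j < l generalizing j l
  · rw [mul_comm, ← this hjl.symm (hjl.symm.lt_of_le (not_lt.1 hlt))]
    exact congrArg probPerm (funext fun σ => propext and_comm)
  by_cases hj : (j : ℕ) + 1 = k
  · simp only [hj, eventB_self, true_and, probB_self, one_mul]
    exact probPerm_eventB hk1 hkn l
  by_cases hl : (l : ℕ) + 1 = k
  · simp only [hl, eventB_self, and_true, probB_self, mul_one]
    exact probPerm_eventB hk1 hkn j
  simp only [eventB_iff_isFirstIn _ hj, eventB_iff_isFirstIn _ hl]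
  rw [probB, probB, if_neg hj, if_neg hl, ← card_keysB hk1 hkn hj, ← card_keysB hk1 hkn hl,
    one_div, one_div]
  exact probPerm_isFirstIn_and (mem_keysB_self hj) (mem_keysB_self hl) (keysB_laminar hlt hj hl)

end ProbB

section Sums

lemma sum_range_split_around (f : ℕ → ℝ) {k n : ℕ} (hk1 : 1 ≤ k)
    (hkn : k ≤ n) :
    ∑ u ∈ range n, f (u + 1)
      = ∑ i ∈ range (k - 1), f (k - (i + 1)) + f k + ∑ i ∈ range (n - k), f (k + (i + 1)) := by
  obtain ⟨m, rfl⟩ := Nat.exists_eq_add_of_le hkn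
  obtain ⟨k, rfl⟩ := Nat.exists_eq_add_of_le' hk1
  simp only [Nat.add_sub_cancel, Nat.add_sub_cancel_left, sum_range_add, sum_range_succ]
  rw [← sum_range_reflect]
  congr 2
  exact sum_congr rfl fun i hi => by rw [mem_range] at hi; congr 1; omega

lemma H1_succ (m : ℕ) : H1 (m + 1) = H1 m + 1 / (m + 1) := by
  rw [H1, H1, sum_range_succ]

lemma H2_succ (m : ℕ) : H2 (m + 1) = H2 m + 1 / (m + 1) ^ 2 := by
  rw [H2, H2, sum_range_succ]

lemma sum_add_sq_mul_inv_sub_inv_sq (x : ℝ) (m : ℕ) :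
    ∑ i ∈ range m, (x + (i + 1)) ^ 2 * (1 / (i + 1) - 1 / (i + 1) ^ 2)
      = x ^ 2 * (H1 m - H2 m) + 2 * x * (m - H1 m) + m * (m - 1) / 2 := by
  induction m with
  | zero => simp [H1, H2]
  | succ m ih =>
    rw [sum_range_succ, ih, H1_succ, H2_succ]
    push_cast
    field_simp
    ring

lemma probB_sub {k i : ℕ} (hi : i + 1 ≤ k) : probB k (k - (i + 1)) = 1 / (i + 1) := by
  rw [probB, if_neg (by omega), Nat.cast_sub hi,
    show (k : ℝ) - (i + 1 : ℕ) - k = -(i + 1) by push_cast; ring, abs_neg,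
    abs_of_pos (by positivity)]

lemma probB_add (k i : ℕ) : probB k (k + (i + 1)) = 1 / (i + 1) := by
  rw [probB, if_neg (by omega),
    show ((k + (i + 1) : ℕ) : ℝ) - k = i + 1 by push_cast; ring, abs_of_pos (by positivity)]

lemma sum_sq_mul_probB {k n : ℕ} (hk1 : 1 ≤ k) (hkn : k ≤ n) :
    ∑ u ∈ range n, ((u + 1 : ℕ) : ℝ) ^ 2 * (probB k (u + 1) - probB k (u + 1) ^ 2)
      = (k : ℝ) ^ 2 * ((H1 (k - 1) + H1 (n - k)) - (H2 (k - 1) + H2 (n - k)) - 3)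
        + (n : ℝ) ^ 2 / 2 + (k : ℝ) * n + 2 * (k : ℝ) * (H1 (k - 1) - H1 (n - k))
        - (n : ℝ) / 2 + k + 1 := by
  rw [sum_range_split_around (fun u => (u : ℝ) ^ 2 * (probB k u - probB k u ^ 2)) hk1 hkn,
    probB_self]
  have hbelow : ∑ i ∈ range (k - 1), ((k - (i + 1) : ℕ) : ℝ) ^ 2
        * (probB k (k - (i + 1)) - probB k (k - (i + 1)) ^ 2)
      = ∑ i ∈ range (k - 1), (-k + ((i : ℝ) + 1)) ^ 2 * (1 / (i + 1) - 1 / (i + 1) ^ 2) := by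
    refine sum_congr rfl fun i hi => ?_
    have hi' : i + 1 ≤ k := by rw [mem_range] at hi; omega
    rw [probB_sub hi', one_div_pow, Nat.cast_sub hi']
    push_cast
    ring
  have habove : ∑ i ∈ range (n - k), ((k + (i + 1) : ℕ) : ℝ) ^ 2
        * (probB k (k + (i + 1)) - probB k (k + (i + 1)) ^ 2)
      = ∑ i ∈ range (n - k), ((k : ℝ) + (i + 1)) ^ 2 * (1 / (i + 1) - 1 / (i + 1) ^ 2) := by
    refine sum_congr rfl fun i _ => ?_
    rw [probB_add, one_div_pow]
    push_cast
    ring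
  rw [hbelow, habove, sum_add_sq_mul_inv_sub_inv_sq, sum_add_sq_mul_inv_sub_inv_sq,
    Nat.cast_sub hk1, Nat.cast_sub hkn]
  push_cast
  ring

end Sums

end RandomBST

/-- In the random permutation model on `{1,…,n}`: for every `1 ≤ k ≤ n`,
the variance of `\bar W_k(n) = Σ_{j=1}^n j·1_{B_{j,k}}` equals
`k²(H^{(1)}_{k,n} − H^{(2)}_{k,n} − 3) + n²/2 + kn + 2k(H^{(1)}_{k−1} − H^{(1)}_{n−k}) − n/2 + k + 1`. -/
theorem variance_barW (n k : ℕ) (hk1 : 1 ≤ k) (hk2 : k ≤ n) :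
    varPerm (fun σ : Equiv.Perm (Fin n) => barW σ k)
      = (k : ℝ) ^ 2 * ((H1 (k - 1) + H1 (n - k)) - (H2 (k - 1) + H2 (n - k)) - 3)
        + (n : ℝ) ^ 2 / 2 + (k : ℝ) * n + 2 * (k : ℝ) * (H1 (k - 1) - H1 (n - k))
        - (n : ℝ) / 2 + k + 1 := by
  open RandomBST in
  rw [← sum_sq_mul_probB hk1 hk2, ← Fin.sum_univ_eq_sum_range
    (fun u => ((u + 1 : ℕ) : ℝ) ^ 2 * (probB k (u + 1) - probB k (u + 1) ^ 2))]
  unfold barW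
  rw [varPerm_sum_mul_ind _ _ _ fun j _ l _ hjl => by
    rw [probPerm_eventB_and hk1 hk2 hjl, probPerm_eventB hk1 hk2, probPerm_eventB hk1 hk2]]
  simp only [probPerm_eventB hk1 hk2]
  push_cast
  rfl
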